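/- Let C ⊂ ℝ³ be a closed convex cone with apex at the origin that is not a half-space and has nonempty interior. If C admits infinitely many distinct planes of symmetry through the origin all containing a common line L, then C is a right circular cone (i.e., C is invariant under all rotations about L). -/

import Mathlib

noncomputable section

local notation "E" => EuclideanSpace ℝ (Fin 3)

/-!
Fix an orthonormal basis `B` with `B 0 ∈ L` and let `ρ θ` be the rotation by `θ` about `B 0`.
Every rotation about `L` is some `ρ θ`, and the angles `θ` with `ρ θ '' C = C` form an additive
subgroup `Θ` of `ℝ`, closed because `C` is. The reflections in the given planes are infinitely
many symmetries of `C` fixing `B 0`; either infinitely many of them have positive determinant, or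
composing those of negative determinant with a fixed one yields infinitely many that do. Either
way infinitely many rotations `ρ θ` with `θ ∈ (-π, π]` preserve `C`, so `Θ` is not cyclic, hence
dense, hence all of `ℝ`.
-/

open Real Set

theorem Real.exists_mem_Ioc_cos_eq_sin_eq {a b : ℝ} (h : a ^ 2 + b ^ 2 = 1) :
    ∃ θ ∈ Ioc (-π) π, cos θ = a ∧ sin θ = b := by
  set z : ℂ := ⟨a, b⟩
  have hz : ‖z‖ = 1 := by simp [Complex.norm_def, Complex.normSq_apply, z, ← sq, h]
  have hz0 : z ≠ 0 := norm_ne_zero_iff.mp (by simp [hz])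
  exact ⟨z.arg, z.arg_mem_Ioc, by simp [Complex.cos_arg hz0, hz, z],
    by simp [Complex.sin_arg, hz, z]⟩

theorem isClosed_setOf_mapsTo {α X Y : Type*} [TopologicalSpace α] [TopologicalSpace Y]
    {f : α → X → Y} (hf : ∀ x, Continuous fun a => f a x) (s : Set X) {t : Set Y}
    (ht : IsClosed t) : IsClosed {a | MapsTo (f a) s t} := by
  have : {a | MapsTo (f a) s t} = ⋂ x ∈ s, (fun a => f a x) ⁻¹' t := by
    ext a
    simp [MapsTo]
  rw [this]
  exact isClosed_biInter fun x _ => ht.preimage (hf x)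

theorem AddSubgroup.eq_top_of_isClosed_of_infinite_inter {S : AddSubgroup ℝ}
    (hS : IsClosed (S : Set ℝ)) {K : Set ℝ} (hK : Bornology.IsBounded K)
    (hKS : (K ∩ S).Infinite) : S = ⊤ := by
  rcases S.dense_or_cyclic with hd | ⟨a, rfl⟩
  · exact SetLike.coe_injective (hS.closure_eq.symm.trans hd.closure_eq)
  · rw [← zmultiples_eq_closure] at hS hKS
    exact absurd (Metric.finite_isBounded_inter_isClosed
      (SetLike.isDiscrete_iff_discreteTopology.mpr inferInstance) hK hS) hKS

theorem LinearIsometryEquiv.infinite_setOf_det_pos {F : Type*} [NormedAddCommGroup F]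
    [InnerProductSpace ℝ F] {T : Set (F ≃ₗᵢ[ℝ] F)} (hT : T.Infinite)
    (hmul : ∀ S ∈ T, ∀ S' ∈ T, S.trans S' ∈ T) :
    {S | S ∈ T ∧ 0 < LinearMap.det S.toLinearIsometry.toLinearMap}.Infinite := by
  intro hpos
  have hneg : {S | S ∈ T ∧ LinearMap.det S.toLinearIsometry.toLinearMap < 0}.Infinite := by
    refine fun hneg => hT ((hpos.union hneg).subset fun S hS => ?_)
    rcases (S.toLinearEquiv.isUnit_det'.ne_zero).lt_or_gt with h | h
    exacts [Or.inr ⟨hS, h⟩, Or.inl ⟨hS, h⟩]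
  obtain ⟨σ, hσT, hσ⟩ := hneg.nonempty
  refine hneg ((hpos.preimage (mul_right_injective σ).injOn).subset fun S hS => ?_)
  refine ⟨hmul S hS.1 σ hσT, ?_⟩
  change 0 < LinearMap.det (σ.toLinearIsometry.toLinearMap ∘ₗ S.toLinearIsometry.toLinearMap)
  rw [LinearMap.det_comp]
  exact mul_pos_of_neg_of_neg hσ hS.2

theorem Submodule.reflection_injective {F : Type*} [NormedAddCommGroup F]
    [InnerProductSpace ℝ F] [FiniteDimensional ℝ F] :
    Function.Injective fun K : Submodule ℝ F => K.reflection := by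
  intro K K' h
  ext x
  have hx : K.reflection x = K'.reflection x := congrArg (fun f : F ≃ₗᵢ[ℝ] F => f x) h
  rw [← K.reflection_eq_self_iff, ← K'.reflection_eq_self_iff, hx]

theorem exists_orthonormalBasis_apply_zero_mem {F : Type*} [NormedAddCommGroup F]
    [InnerProductSpace ℝ F] {n : ℕ} (hn : Module.finrank ℝ F = n + 1) {L : Submodule ℝ F}
    (hL : L ≠ ⊥) : ∃ B : OrthonormalBasis (Fin (n + 1)) ℝ F, B 0 ∈ L := by
  have := Module.finite_of_finrank_eq_succ hn
  obtain ⟨x, hxL, hx⟩ := L.ne_bot_iff.mp hL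
  have hu : Orthonormal ℝ (({0} : Set (Fin (n + 1))).domRestrict fun _ => ‖x‖⁻¹ • x) := by
    rw [orthonormal_iff_ite]
    rintro ⟨i, rfl⟩ ⟨j, rfl⟩
    simp only [domRestrict_apply, real_inner_self_eq_norm_sq, norm_smul, norm_inv, norm_norm,
      inv_mul_cancel₀ (norm_ne_zero_iff.mpr hx)]
    norm_num
  obtain ⟨B, hB⟩ := hu.exists_orthonormalBasis_extension_of_card_eq (by simpa using hn)
  exact ⟨B, (hB 0 rfl).symm ▸ L.smul_mem _ hxL⟩

namespace OrthonormalBasis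

variable {F : Type*} [NormedAddCommGroup F] [InnerProductSpace ℝ F]
  (B : OrthonormalBasis (Fin 3) ℝ F)

local notation "⟪" x ", " y "⟫" => @inner ℝ _ _ x y

theorem inner_smul_add_smul_one_two (p q r s : ℝ) :
    ⟪p • B 1 + q • B 2, r • B 1 + s • B 2⟫ = p * r + q * s := by
  simp [inner_add_left, inner_add_right, real_inner_smul_left, real_inner_smul_right,
    B.inner_eq_ite, mul_comm]

def axialFrame (θ : ℝ) : Fin 3 → F :=
  ![B 0, cos θ • B 1 + sin θ • B 2, -sin θ • B 1 + cos θ • B 2]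

theorem orthonormal_axialFrame (θ : ℝ) : Orthonormal ℝ (B.axialFrame θ) := by
  rw [axialFrame, orthonormal_iff_ite]
  intro i j
  fin_cases i <;> fin_cases j <;>
    simp only [Fin.isValue, Fin.zero_eta, Fin.mk_one, Fin.reduceFinMk, Matrix.cons_val,
      inner_add_left, inner_add_right, real_inner_smul_left, real_inner_smul_right,
      B.inner_eq_ite, Fin.reduceEq, if_true, if_false] <;>
    first | ring1 | linear_combination sin_sq_add_cos_sq θ

def axialRotation (θ : ℝ) : F ≃ₗᵢ[ℝ] F :=
  B.equiv ((basisOfOrthonormalOfCardEqFinrank (B.orthonormal_axialFrame θ)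
      (Module.finrank_eq_card_basis B.toBasis).symm).toOrthonormalBasis
    (by rw [coe_basisOfOrthonormalOfCardEqFinrank]; exact B.orthonormal_axialFrame θ))
    (Equiv.refl _)

theorem axialRotation_apply_zero (θ : ℝ) : B.axialRotation θ (B 0) = B 0 := by
  simp [axialRotation, axialFrame]

theorem axialRotation_apply_one (θ : ℝ) :
    B.axialRotation θ (B 1) = cos θ • B 1 + sin θ • B 2 := by
  simp [axialRotation, axialFrame]

theorem axialRotation_apply_two (θ : ℝ) :
    B.axialRotation θ (B 2) = -sin θ • B 1 + cos θ • B 2 := by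
  simp [axialRotation, axialFrame]

theorem ext_linearIsometryEquiv_fin_three {S T : F ≃ₗᵢ[ℝ] F} (h₀ : S (B 0) = T (B 0))
    (h₁ : S (B 1) = T (B 1)) (h₂ : S (B 2) = T (B 2)) : S = T :=
  B.toBasis.ext_linearIsometryEquiv fun i => by fin_cases i <;> simpa

theorem axialRotation_zero : B.axialRotation 0 = LinearIsometryEquiv.refl ℝ F :=
  B.ext_linearIsometryEquiv_fin_three (by simp [axialRotation_apply_zero])
    (by simp [axialRotation_apply_one]) (by simp [axialRotation_apply_two])

theorem axialRotation_add (θ ψ : ℝ) :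
    B.axialRotation (θ + ψ) = (B.axialRotation ψ).trans (B.axialRotation θ) := by
  refine B.ext_linearIsometryEquiv_fin_three ?_ ?_ ?_ <;>
    simp only [LinearIsometryEquiv.trans_apply, map_add, map_smul, axialRotation_apply_zero,
      axialRotation_apply_one, axialRotation_apply_two, cos_add, sin_add] <;>
    module

theorem axialRotation_neg (θ : ℝ) : B.axialRotation (-θ) = (B.axialRotation θ).symm := by
  ext x
  rw [eq_comm, LinearIsometryEquiv.symm_apply_eq, ← LinearIsometryEquiv.trans_apply,
    ← axialRotation_add, add_neg_cancel, axialRotation_zero]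
  rfl

theorem continuous_axialRotation_apply (x : F) : Continuous fun θ => B.axialRotation θ x := by
  have hx (θ : ℝ) : B.axialRotation θ x = ⟪B 0, x⟫ • B 0 +
      ⟪B 1, x⟫ • (cos θ • B 1 + sin θ • B 2) + ⟪B 2, x⟫ • (-sin θ • B 1 + cos θ • B 2) := by
    conv_lhs => rw [← B.sum_repr' x]
    simp only [Fin.sum_univ_three, map_add, map_smul, axialRotation_apply_zero,
      axialRotation_apply_one, axialRotation_apply_two]
  simp only [hx]
  fun_prop

theorem exists_eq_axialRotation_of_det_pos (S : F ≃ₗᵢ[ℝ] F) (h₀ : S (B 0) = B 0)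
    (hdet : 0 < LinearMap.det S.toLinearIsometry.toLinearMap) :
    ∃ θ ∈ Ioc (-π) π, S = B.axialRotation θ := by
  have hcoord (j : Fin 3) (hj : j ≠ 0) : ∃ p q : ℝ, S (B j) = p • B 1 + q • B 2 := by
    have h0j : ⟪B 0, S (B j)⟫ = 0 := by rw [← h₀, S.inner_map_map, B.inner_eq_zero hj.symm]
    refine ⟨⟪B 1, S (B j)⟫, ⟪B 2, S (B j)⟫, ?_⟩
    conv_lhs => rw [← B.sum_repr' (S (B j))]
    rw [Fin.sum_univ_three, h0j, zero_smul, zero_add]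
  obtain ⟨a, b, h₁⟩ := hcoord 1 (by decide)
  obtain ⟨c, d, h₂⟩ := hcoord 2 (by decide)
  have hab : a * a + b * b = 1 := by
    simpa only [h₁, inner_smul_add_smul_one_two, B.inner_eq_ite, if_pos] using
      S.inner_map_map (B 1) (B 1)
  have hcd : c * c + d * d = 1 := by
    simpa only [h₂, inner_smul_add_smul_one_two, B.inner_eq_ite, if_pos] using
      S.inner_map_map (B 2) (B 2)
  have hac : a * c + b * d = 0 := by
    simpa only [h₁, h₂, inner_smul_add_smul_one_two,
      B.inner_eq_zero (by decide : (1 : Fin 3) ≠ 2)] using S.inner_map_map (B 1) (B 2)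
  have hdet_eq : LinearMap.det S.toLinearIsometry.toLinearMap = a * d - b * c := by
    rw [← LinearMap.det_toMatrix B.toBasis, Matrix.det_fin_three]
    simp [LinearMap.toMatrix_apply, h₀, h₁, h₂, mul_comm]
  have hunit : a * d - b * c = 1 := by
    have hsq : (a * d - b * c) ^ 2 = 1 := by
      linear_combination (c * c + d * d) * hab + hcd - (a * c + b * d) * hac
    exact (pow_eq_one_iff_of_nonneg (hdet_eq ▸ hdet).le two_ne_zero).mp hsq
  have hsum : (d - a) ^ 2 + (c + b) ^ 2 = 0 := by linear_combination hab + hcd - 2 * hunit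
  have hd : d = a := by nlinarith [sq_nonneg (d - a), sq_nonneg (c + b)]
  have hc : c = -b := by nlinarith [sq_nonneg (d - a), sq_nonneg (c + b)]
  obtain ⟨θ, hθ, hcos, hsin⟩ :=
    Real.exists_mem_Ioc_cos_eq_sin_eq (a := a) (b := b) (by linear_combination hab)
  refine ⟨θ, hθ, B.ext_linearIsometryEquiv_fin_three ?_ ?_ ?_⟩
  · rw [h₀, axialRotation_apply_zero]
  · rw [h₁, axialRotation_apply_one, hcos, hsin]
  · rw [h₂, axialRotation_apply_two, hcos, hsin, hd, hc, neg_smul]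

def stabilizerAngles (C : Set F) : AddSubgroup ℝ where
  carrier := {θ | B.axialRotation θ '' C = C}
  zero_mem' := by simp [axialRotation_zero]
  add_mem' {θ ψ} (hθ : _ = C) (hψ : _ = C) := by
    simp only [mem_ofPred_eq, axialRotation_add, LinearIsometryEquiv.coe_trans, image_comp, hψ,
      hθ]
  neg_mem' {θ} (hθ : _ = C) := by
    rw [mem_ofPred_eq, axialRotation_neg]
    conv_lhs => rw [← hθ]
    exact (B.axialRotation θ).toEquiv.symm_image_image C

theorem mem_stabilizerAngles {C : Set F} {θ : ℝ} :
    θ ∈ B.stabilizerAngles C ↔ B.axialRotation θ '' C = C :=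
  Iff.rfl

theorem isClosed_stabilizerAngles {C : Set F} (hC : IsClosed C) :
    IsClosed (B.stabilizerAngles C : Set ℝ) := by
  have hM : IsClosed {θ | MapsTo (B.axialRotation θ) C C} :=
    isClosed_setOf_mapsTo B.continuous_axialRotation_apply C hC
  suffices (B.stabilizerAngles C : Set ℝ) =
      {θ | MapsTo (B.axialRotation θ) C C} ∩ Neg.neg ⁻¹' {θ | MapsTo (B.axialRotation θ) C C} by
    rw [this]
    exact hM.inter (hM.preimage continuous_neg)
  ext θ
  refine ⟨fun hθ => ⟨?_, ?_⟩, fun ⟨h, h'⟩ => h.image_subset.antisymm fun y hy => ?_⟩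
  · exact mapsTo_iff_image_subset.mpr (B.mem_stabilizerAngles.mp hθ).subset
  · exact mapsTo_iff_image_subset.mpr
      (B.mem_stabilizerAngles.mp ((B.stabilizerAngles C).neg_mem hθ)).subset
  · refine ⟨B.axialRotation (-θ) y, h' hy, ?_⟩
    rw [axialRotation_neg, LinearIsometryEquiv.apply_symm_apply]

theorem infinite_inter_stabilizerAngles {C : Set F}
    (h : {S : F ≃ₗᵢ[ℝ] F | (S (B 0) = B 0 ∧ S '' C = C) ∧
      0 < LinearMap.det S.toLinearIsometry.toLinearMap}.Infinite) :
    (Ioc (-π) π ∩ (B.stabilizerAngles C : Set ℝ)).Infinite := by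
  refine fun hfin => h ((hfin.image B.axialRotation).subset ?_)
  rintro S ⟨⟨h₀, hC⟩, hdet⟩
  obtain ⟨θ, hθ, rfl⟩ := B.exists_eq_axialRotation_of_det_pos S h₀ hdet
  exact ⟨θ, ⟨hθ, hC⟩, rfl⟩

end OrthonormalBasis

theorem stmt_14_general (C : Set E)
    (hCclosed : IsClosed C)
    (L : Submodule ℝ E) (hL : Module.finrank ℝ L = 1)
    (hsym : {P : Submodule ℝ E |
        Module.finrank ℝ P = 2 ∧ L ≤ P ∧ P.reflection '' C = C}.Infinite) :
    ∀ R : E ≃ₗᵢ[ℝ] E,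
      LinearMap.det (R.toLinearIsometry.toLinearMap) = 1 → (∀ v ∈ L, R v = v) →
      R '' C = C := by
  intro R hdet hfix
  obtain ⟨B, hBL⟩ : ∃ B : OrthonormalBasis (Fin 3) ℝ E, B 0 ∈ L :=
    exists_orthonormalBasis_apply_zero_mem finrank_euclideanSpace_fin
      fun h => by rw [h, finrank_bot] at hL; exact zero_ne_one hL
  set T : Set (E ≃ₗᵢ[ℝ] E) := {S | S (B 0) = B 0 ∧ S '' C = C}
  have hT : T.Infinite := by
    refine (hsym.image Submodule.reflection_injective.injOn).mono ?_
    rintro _ ⟨P, ⟨-, hLP, hPC⟩, rfl⟩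
    exact ⟨P.reflection_mem_subspace_eq_self (hLP hBL), hPC⟩
  have hmul : ∀ S ∈ T, ∀ S' ∈ T, S.trans S' ∈ T := by
    rintro S ⟨hS₀, hSC⟩ S' ⟨hS'₀, hS'C⟩
    exact ⟨by simp [hS₀, hS'₀], by rw [LinearIsometryEquiv.coe_trans, image_comp, hSC, hS'C]⟩
  have htop : B.stabilizerAngles C = ⊤ :=
    AddSubgroup.eq_top_of_isClosed_of_infinite_inter (B.isClosed_stabilizerAngles hCclosed)
      (Metric.isBounded_Ioc _ _)
      (B.infinite_inter_stabilizerAngles (LinearIsometryEquiv.infinite_setOf_det_pos hT hmul))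
  obtain ⟨θ, -, rfl⟩ := B.exists_eq_axialRotation_of_det_pos R (hfix _ hBL) (hdet ▸ one_pos)
  exact B.mem_stabilizerAngles.mp (htop ▸ AddSubgroup.mem_top θ)

/-- Let `C ⊂ ℝ³` be a closed convex cone with apex at the origin which is
not a half-space and has nonempty interior. If `C` admits infinitely many distinct planes
of symmetry through the origin all containing a common line `L`, then `C` is invariant
under all rotations about `L` (i.e. it is a right circular cone with axis `L`). -/
theorem stmt_14 (C : Set E)
    (hCclosed : IsClosed C) (hCconv : Convex ℝ C)
    (hCcone : ∀ c ∈ C, ∀ l : ℝ, 0 ≤ l → l • c ∈ C)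
    (hCint : (interior C).Nonempty)
    (hnothalf : ¬ ∃ f : E →L[ℝ] ℝ, f ≠ 0 ∧ C = {z | f z ≤ 0})
    (L : Submodule ℝ E) (hL : Module.finrank ℝ L = 1)
    (hsym : {P : Submodule ℝ E |
        Module.finrank ℝ P = 2 ∧ L ≤ P ∧ P.reflection '' C = C}.Infinite) :
    ∀ R : E ≃ₗᵢ[ℝ] E,
      LinearMap.det (R.toLinearIsometry.toLinearMap) = 1 → (∀ v ∈ L, R v = v) →
      R '' C = C :=
  stmt_14_general C hCclosed L hL hsym

end
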